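/- arXiv:1509.08961 — 5 statements merged into one kernel-verified Lean document; each statement's English description precedes it below -/
import Mathlib

section
/- Let H be an abelian group with quasi-nilpotent endomorphism Λ, H_n := ker(Λ^n). Then the following are equivalent: (i) H_1 = ker(Λ) is torsion-free; (ii) H is torsion-free; (iii) H_{n+1}/H_n is torsion-free for every n ≥ 0. -/
/-- For a quasi-nilpotent endomorphism `Λ` of an abelian group `H` with
`H_n = ker (Λ^n)`, the following are equivalent:
(i) `H_1 = ker Λ` is torsion-free; (ii) `H` is torsion-free;
(iii) `H_{n+1}/H_n` is torsion-free for every `n ≥ 0`. -/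
theorem stmt4 {H : Type*} [CommGroup H] (Λ : H →* H)
    (hqn : ∀ h : H, ∃ n : ℕ, (⇑Λ)^[n] h = 1) :
    List.TFAE
      [∀ h : H, Λ h = 1 → ∀ k : ℕ, 1 ≤ k → h ^ k = 1 → h = 1,
       ∀ h : H, ∀ k : ℕ, 1 ≤ k → h ^ k = 1 → h = 1,
       ∀ n : ℕ, ∀ h : H, (⇑Λ)^[n + 1] h = 1 →
         ∀ k : ℕ, 1 ≤ k → (⇑Λ)^[n] (h ^ k) = 1 → (⇑Λ)^[n] h = 1] := by
  tfae_have 1 → 2 := by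
    intro h1 h k hk hpow
    obtain ⟨n, hn⟩ := hqn h
    induction n with
    | zero => exact hn
    | succ n ih =>
      apply ih
      have hg1 : Λ ((⇑Λ)^[n] h) = 1 := by
        rw [← Function.iterate_succ_apply' ⇑Λ n h]; exact hn
      have hgk : ((⇑Λ)^[n] h) ^ k = 1 := by
        rw [← iterate_map_pow Λ, hpow, iterate_map_one Λ]
      exact h1 _ hg1 k hk hgk
  tfae_have 2 → 3 := by
    intro h2 n h _ k hk hpow
    apply h2 _ k hk
    rw [← iterate_map_pow Λ]; exact hpow
  tfae_have 3 → 1 := by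
    intro h3 h hΛ k hk hpow
    have := h3 0 h (by simpa using hΛ) k hk (by simpa using hpow)
    simpa using this
  tfae_finish
end

section
/- Let H be a torsion-free abelian group with quasi-nilpotent endomorphism Λ, H_n := ker(Λ^n), and Φ(h) := h·Λ(h). Then for each m ≥ 1 and each h ∈ H_{m+1} \ H_m, the elements Φ^n(h), n ≥ 0, are pairwise distinct modulo H_{m-1}; that is, if Φ^n(h) ≡ Φ^k(h) (mod H_{m-1}) then n = k. -/
/-- If `H` is torsion-free abelian, `Λ` quasi-nilpotent, `Φ h = h * Λ h`, and
`h ∈ H_{m+1} \ H_m` (`H_n = ker (Λ^n)`), then the elements `Φ^n h` are pairwise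
distinct modulo `H_{m-1}`. -/
theorem stmt5 {H : Type*} [CommGroup H] (Λ : H →* H)
    (hqn : ∀ h : H, ∃ n : ℕ, (⇑Λ)^[n] h = 1)
    (htf : ∀ h : H, ∀ k : ℕ, 1 ≤ k → h ^ k = 1 → h = 1)
    (Φ : H → H) (hΦ : ∀ h, Φ h = h * Λ h)
    (m : ℕ) (hm : 1 ≤ m) (h : H)
    (h1 : (⇑Λ)^[m + 1] h = 1) (h2 : ¬ (⇑Λ)^[m] h = 1)
    (n k : ℕ) (hnk : (⇑Λ)^[m - 1] (Φ^[n] h * (Φ^[k] h)⁻¹) = 1) :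
    n = k := by
  have hmul : ∀ (j : ℕ) (x y : H), (⇑Λ)^[j] (x * y) = (⇑Λ)^[j] x * (⇑Λ)^[j] y := by
    intro j x y
    induction j generalizing x y with
    | zero => rfl
    | succ j ih => rw [Function.iterate_succ_apply, Function.iterate_succ_apply,
        Function.iterate_succ_apply, map_mul, ih]
  have hone : ∀ j : ℕ, (⇑Λ)^[j] (1 : H) = 1 := by
    intro j
    induction j with
    | zero => rfl
    | succ j ih => rw [Function.iterate_succ_apply, map_one, ih]
  have hcomm : ∀ (j : ℕ) (x : H), (⇑Λ)^[j] (Λ x) = Λ ((⇑Λ)^[j] x) := by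
    intro j x
    rw [← Function.iterate_succ_apply, Function.iterate_succ_apply']
  -- A : Λ^[m+1] (Φ^[j] h) = 1 for all j
  have hA : ∀ j : ℕ, (⇑Λ)^[m + 1] (Φ^[j] h) = 1 := by
    intro j
    induction j with
    | zero => simpa using h1
    | succ j ih =>
        rw [Function.iterate_succ_apply' Φ j h, hΦ, hmul, ih, hcomm, ih, map_one, one_mul]
  -- B : Λ^[m] (Φ^[j] h) = Λ^[m] h
  have hB : ∀ j : ℕ, (⇑Λ)^[m] (Φ^[j] h) = (⇑Λ)^[m] h := by
    intro j
    induction j with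
    | zero => rfl
    | succ j ih =>
        rw [Function.iterate_succ_apply' Φ j h, hΦ, hmul, ih,
          ← Function.iterate_succ_apply, hA j, mul_one]
  -- C : Λ^[m-1] (Φ^[j] h) = Λ^[m-1] h * (Λ^[m] h)^j
  have hC : ∀ j : ℕ, (⇑Λ)^[m - 1] (Φ^[j] h) = (⇑Λ)^[m - 1] h * ((⇑Λ)^[m] h) ^ j := by
    intro j
    induction j with
    | zero => simp
    | succ j ih =>
        have hstep : (⇑Λ)^[m - 1] (Λ (Φ^[j] h)) = (⇑Λ)^[m] h := by
          rw [← Function.iterate_succ_apply]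
          show (⇑Λ)^[m - 1 + 1] (Φ^[j] h) = _
          rw [Nat.sub_add_cancel hm, hB j]
        rw [Function.iterate_succ_apply' Φ j h, hΦ, hmul, ih, hstep, pow_succ, mul_assoc]
  -- conclude
  have hinv : ∀ x : H, (⇑Λ)^[m - 1] x⁻¹ = ((⇑Λ)^[m - 1] x)⁻¹ := by
    intro x
    have := hmul (m - 1) x x⁻¹
    rw [mul_inv_cancel, hone] at this
    exact eq_inv_of_mul_eq_one_right this.symm
  rw [hmul, hinv, hC n, hC k] at hnk
  have hpow : ((⇑Λ)^[m] h) ^ n = ((⇑Λ)^[m] h) ^ k := by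
    rw [mul_inv_eq_one] at hnk
    exact mul_left_cancel hnk
  set a := (⇑Λ)^[m] h with ha
  have key : ∀ p q : ℕ, p ≤ q → a ^ q = a ^ p → q = p := by
    intro p q hpq heq
    by_contra hne
    have hlt : p < q := lt_of_le_of_ne hpq (Ne.symm hne)
    have h1' : a ^ (q - p) * a ^ p = 1 * a ^ p := by
      rw [← pow_add, Nat.sub_add_cancel hpq, heq, one_mul]
    have h2' : a ^ (q - p) = 1 := mul_right_cancel h1'
    exact h2 (htf a (q - p) (by omega) h2')
  rcases le_total n k with hle | hle
  · exact (key n k hle hpow.symm).symm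
  · exact key k n hle hpow
end

section
/- Let (G, Λ, ι) and (G', Λ', ι') be signatures and α : G → G' a morphism of signatures. Then α is injective. -/
/-- Every morphism of signatures is injective. A signature is `(G, Λ, ι)` with
`G` abelian, `Λ` quasi-nilpotent and `ι` an injective homomorphism from
`ker Λ` to the circle group; a morphism is a group homomorphism `α` with
`Λ' ∘ α = α ∘ Λ` and `ι' ∘ α = ι` on `ker Λ`. -/
theorem stmt6 {G G' : Type*} [CommGroup G] [CommGroup G']
    (Λ : G →* G) (Λ' : G' →* G')
    (hqn : ∀ g : G, ∃ n : ℕ, (⇑Λ)^[n] g = 1)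
    (hqn' : ∀ g : G', ∃ n : ℕ, (⇑Λ')^[n] g = 1)
    (ι : G → Circle) (ι' : G' → Circle)
    (hιmul : ∀ a b : G, Λ a = 1 → Λ b = 1 → ι (a * b) = ι a * ι b)
    (hιinj : ∀ a b : G, Λ a = 1 → Λ b = 1 → ι a = ι b → a = b)
    (hι'mul : ∀ a b : G', Λ' a = 1 → Λ' b = 1 → ι' (a * b) = ι' a * ι' b)
    (hι'inj : ∀ a b : G', Λ' a = 1 → Λ' b = 1 → ι' a = ι' b → a = b)
    (α : G →* G') (hcomm : ∀ g, Λ' (α g) = α (Λ g))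
    (hrestr : ∀ g : G, Λ g = 1 → ι' (α g) = ι g) :
    Function.Injective α := by
  -- ι and ι' send 1 to 1
  have hΛ1 : Λ (1 : G) = 1 := map_one Λ
  have hι1 : ι 1 = 1 := by
    have := hιmul 1 1 hΛ1 hΛ1
    rw [mul_one] at this
    exact left_eq_mul.mp this 
  have hι'1 : ι' 1 = 1 := by
    have h1 : Λ' (1 : G') = 1 := map_one Λ'
    have := hι'mul 1 1 h1 h1
    rw [mul_one] at this
    exact left_eq_mul.mp this 
  -- kernel is trivial, by induction on nilpotency degree
  have key : ∀ n : ℕ, ∀ g : G, (⇑Λ)^[n] g = 1 → α g = 1 → g = 1 := by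
    intro n
    induction n with
    | zero => intro g hg _; simpa using hg
    | succ n ih =>
      intro g hg hαg
      have hΛg : Λ g = 1 := by
        apply ih (Λ g)
        · rw [← Function.iterate_succ_apply]; exact hg
        · rw [← hcomm, hαg, map_one]
      have : ι g = ι 1 := by
        rw [← hrestr g hΛg, hαg, hι'1, hι1]
      exact hιinj g 1 hΛg hΛ1 this
  intro a b hab
  have : α (a * b⁻¹) = 1 := by rw [map_mul, map_inv, hab, mul_inv_cancel]
  obtain ⟨n, hn⟩ := hqn (a * b⁻¹)
  have := key n _ hn this
  exact mul_inv_eq_one.mp this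
end

section
/- Let (K; ψ) be a topological system whose Koopman operator T on C(K) has one-dimensional fixed space. Then the group G_2 := ker(Λ²) (with Λf = Tf·conj(f) on C(K;𝕋)) consists exactly of the unimodular eigenfunctions of T corresponding to unimodular eigenvalues: f ∈ C(K;𝕋) satisfies Λ²f = 1 if and only if Tf = λf for some λ ∈ 𝕋. -/
/-!
For unimodular `g`, `Λ g = 1` says exactly that `g` is fixed by the Koopman operator, since
`conj (g x) = (g x)⁻¹`. Hence `Λ (Λ f) = 1` iff `Λ f` is fixed, iff (fixed space `= ℂ · 1`)
`Λ f` is a constant `c`, iff `f ∘ ψ = c • f`; the constant is unimodular because `Λ f` is.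
-/

open ComplexConjugate

lemma Complex.mul_conj_eq_iff_eq_mul {a b c : ℂ} (hb : ‖b‖ = 1) : a * conj b = c ↔ a = c * b := by
  have hb₀ : b ≠ 0 := norm_ne_zero_iff.mp (by rw [hb]; exact one_ne_zero)
  rw [← RCLike.inv_eq_conj hb, ← div_eq_mul_inv, div_eq_iff hb₀]

namespace ContinuousMap

variable {X : Type*} [TopologicalSpace X] (ψ : C(X, X)) {g : C(X, ℂ)}

lemma norm_comp_mul_star_apply (hg : ∀ x, ‖g x‖ = 1) (x : X) : ‖(g.comp ψ * star g) x‖ = 1 := by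
  simp [hg]

lemma comp_mul_star_eq_const_iff (hg : ∀ x, ‖g x‖ = 1) (c : ℂ) :
    g.comp ψ * star g = const X c ↔ g.comp ψ = c • g := by
  simp only [ContinuousMap.ext_iff, mul_apply, comp_apply, star_apply, const_apply, smul_apply,
    smul_eq_mul, Complex.star_def, Complex.mul_conj_eq_iff_eq_mul (hg _)]

lemma comp_mul_star_eq_one_iff (hg : ∀ x, ‖g x‖ = 1) : g.comp ψ * star g = 1 ↔ g.comp ψ = g := by
  rw [← const_one, comp_mul_star_eq_const_iff ψ hg, one_smul]

lemma exists_norm_eq_one_of_comp_eq_smul (hg : ∀ x, ‖g x‖ = 1) {c : ℂ} (hc : g.comp ψ = c • g) :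
    ∃ c : ℂ, ‖c‖ = 1 ∧ g.comp ψ = c • g := by
  rcases isEmpty_or_nonempty X with hX | ⟨⟨x⟩⟩
  · exact ⟨1, norm_one, ContinuousMap.ext hX.elim⟩
  · refine ⟨c, ?_, hc⟩
    simpa [hg] using (congrArg (‖· x‖) hc).symm

end ContinuousMap

open ContinuousMap

theorem stmt11_general {K : Type*} [TopologicalSpace K]
    (ψ : C(K, K))
    (Λ : C(K, ℂ) → C(K, ℂ)) (hΛ : ∀ f, Λ f = f.comp ψ * star f)
    (hfix : ∀ f : C(K, ℂ), f.comp ψ = f → ∃ c : ℂ, f = ContinuousMap.const K c)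
    (f : C(K, ℂ)) (hf : ∀ x, ‖f x‖ = 1) :
    Λ (Λ f) = 1 ↔ ∃ c : ℂ, ‖c‖ = 1 ∧ f.comp ψ = c • f := by
  have hΛf : ∀ x, ‖Λ f x‖ = 1 := by rw [hΛ]; exact norm_comp_mul_star_apply ψ hf
  rw [hΛ (Λ f), comp_mul_star_eq_one_iff ψ hΛf]
  constructor
  · intro hfixed
    obtain ⟨c, hc⟩ := hfix _ hfixed
    rw [hΛ, comp_mul_star_eq_const_iff ψ hf] at hc
    exact exists_norm_eq_one_of_comp_eq_smul ψ hf hc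
  · rintro ⟨c, -, hc⟩
    rw [← comp_mul_star_eq_const_iff ψ hf, ← hΛ] at hc
    rw [hc, const_comp]

/-- If the Koopman operator `T f = f ∘ ψ` of a topological system has
one-dimensional fixed space, then a unimodular `f ∈ C(K;𝕋)` satisfies
`Λ² f = 1` (i.e. `f ∈ G₂`) iff `f` is an eigenfunction of `T` with a
unimodular eigenvalue. -/
theorem stmt11 {K : Type*} [TopologicalSpace K] [CompactSpace K] [T2Space K]
    (ψ : C(K, K))
    (Λ : C(K, ℂ) → C(K, ℂ)) (hΛ : ∀ f, Λ f = f.comp ψ * star f)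
    (hfix : ∀ f : C(K, ℂ), f.comp ψ = f → ∃ c : ℂ, f = ContinuousMap.const K c)
    (f : C(K, ℂ)) (hf : ∀ x, ‖f x‖ = 1) :
    Λ (Λ f) = 1 ↔ ∃ c : ℂ, ‖c‖ = 1 ∧ f.comp ψ = c • f :=
  stmt11_general ψ Λ hΛ hfix f hf
end

section
/- Let (K; ψ) be a topological system with quasi-discrete spectrum such that dim fix(T) = 1 and the group H_1 of unimodular eigenvalues of T is torsion-free. Then for every x ∈ K and every quasi-eigenvector f ∈ G \ G_1 (i.e., a non-constant unimodular quasi-eigenvector), the Cesàro averages (1/N)∑_{j=0}^{N-1}(T^j f)(x) converge to 0 as N → ∞. -/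
/-!
Let `d + 1` be the last level with `Λ^[d+1] f ≠ 1`. Then `Λ^[d+1] f` is `ψ`-invariant, hence a
constant `c` because `dim fix(T) = 1`, and `c` is not a root of unity because `H₁` is torsion-free.
Lifting `f` to a circle-valued function turns `Λ` into the coboundary `F ↦ F ∘ ψ / F`, which along
an orbit is the difference operator `u ↦ u (j + 1) / u j`; so `j ↦ f (ψ^[j] x)` is a polynomial
phase whose `(d+1)`-st difference is the irrational constant `c`. Weyl's theorem for such phases
follows by induction on `d` from van der Corput's difference theorem, since the step-`s` difference
of the phase has the irrational leading constant `c ^ s`.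
-/

open Filter Finset Topology ComplexConjugate

def CesaroNull (u : ℕ → ℂ) : Prop :=
  Tendsto (fun N : ℕ => (N : ℂ)⁻¹ * ∑ j ∈ range N, u j) atTop (𝓝 0)

section Cesaro

variable {u v : ℕ → ℂ}

lemma cesaroNull_iff_norm :
    CesaroNull u ↔ Tendsto (fun N : ℕ => (N : ℝ)⁻¹ * ‖∑ j ∈ range N, u j‖) atTop (𝓝 0) := by
  rw [CesaroNull, tendsto_zero_iff_norm_tendsto_zero]
  simp only [norm_mul, norm_inv, Complex.norm_natCast]

lemma cesaroNull_of_norm_sum_le (C : ℝ) (h : ∀ N, ‖∑ j ∈ range N, u j‖ ≤ C) : CesaroNull u :=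
  cesaroNull_iff_norm.2 <| squeeze_zero (fun _ => by positivity)
    (fun N => mul_le_mul_of_nonneg_left (h N) (by positivity))
    (by simpa using tendsto_inv_atTop_nhds_zero_nat.mul_const C)

lemma CesaroNull.add (hu : CesaroNull u) (hv : CesaroNull v) :
    CesaroNull (fun j => u j + v j) := by
  simpa [CesaroNull, sum_add_distrib, mul_add] using Tendsto.add hu hv

lemma norm_sum_range_add_sub_le {C : ℝ} (hu : ∀ j, ‖u j‖ ≤ C) (s N : ℕ) :
    ‖∑ j ∈ range N, u (j + s) - ∑ j ∈ range N, u j‖ ≤ 2 * s * C := by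
  have h₁ : ∑ j ∈ range (N + s), u j = ∑ j ∈ range s, u j + ∑ j ∈ range N, u (j + s) := by
    rw [add_comm N s, sum_range_add]
    simp only [add_comm s]
  have h₂ := sum_range_add u N s
  have : ∑ j ∈ range N, u (j + s) - ∑ j ∈ range N, u j
      = ∑ k ∈ range s, u (N + k) - ∑ k ∈ range s, u k := by
    linear_combination h₂ - h₁
  rw [this]
  calc _ ≤ ∑ _k ∈ range s, C + ∑ _k ∈ range s, C :=
        (norm_sub_le _ _).trans <| add_le_add (norm_sum_le_of_le _ fun _ _ => hu _)
          (norm_sum_le_of_le _ fun _ _ => hu _)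
    _ = 2 * s * C := by simp; ring

lemma CesaroNull.comp_add_right (h : CesaroNull u) {C : ℝ} (hu : ∀ j, ‖u j‖ ≤ C) (s : ℕ) :
    CesaroNull (fun j => u (j + s)) := by
  have hdiff : CesaroNull (fun j => u (j + s) - u j) :=
    cesaroNull_of_norm_sum_le _ fun N => by
      simpa only [sum_sub_distrib] using norm_sum_range_add_sub_le hu s N
  simpa using h.add hdiff

lemma cesaroNull_mul_pow {z : ℂ} (hz : ‖z‖ ≤ 1) (hz₁ : z ≠ 1) (a : ℂ) :
    CesaroNull (fun j => a * z ^ j) :=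
  cesaroNull_of_norm_sum_le (‖a‖ * (2 / ‖z - 1‖)) fun N => by
    rw [← mul_sum, geom_sum_eq hz₁, norm_mul, norm_div]
    gcongr
    calc ‖z ^ N - 1‖ ≤ ‖z‖ ^ N + ‖(1 : ℂ)‖ := (norm_sub_le _ _).trans_eq (by rw [norm_pow])
      _ ≤ 2 := by linarith [norm_one (α := ℂ), pow_le_one₀ (n := N) (norm_nonneg z) hz]

end Cesaro

section VanDerCorput

variable {u : ℕ → ℂ}

def corrSum (u : ℕ → ℂ) (h h' N : ℕ) : ℂ := ∑ j ∈ range N, u (j + h) * conj (u (j + h'))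

lemma norm_corrSum_comm (u : ℕ → ℂ) (h h' N : ℕ) : ‖corrSum u h h' N‖ = ‖corrSum u h' h N‖ := by
  rw [← Complex.norm_conj, corrSum, corrSum, map_sum]
  simp only [map_mul, Complex.conj_conj, mul_comm]

lemma norm_mul_conj_le_one (hu : ∀ j, ‖u j‖ ≤ 1) (i j : ℕ) : ‖u i * conj (u j)‖ ≤ 1 := by
  rw [norm_mul, Complex.norm_conj]
  exact mul_le_one₀ (hu i) (norm_nonneg _) (hu j)

lemma norm_corrSum_self_le (hu : ∀ j, ‖u j‖ ≤ 1) (h N : ℕ) : ‖corrSum u h h N‖ ≤ N :=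
  (norm_sum_le_of_le _ fun _ _ => norm_mul_conj_le_one hu _ _).trans_eq (by simp)

lemma tendsto_inv_mul_norm_corrSum (hu : ∀ j, ‖u j‖ ≤ 1)
    (hcorr : ∀ s, 1 ≤ s → CesaroNull (fun j => u (j + s) * conj (u j))) {h h' : ℕ} (hne : h ≠ h') :
    Tendsto (fun N : ℕ => (N : ℝ)⁻¹ * ‖corrSum u h h' N‖) atTop (𝓝 0) := by
  wlog hlt : h' < h generalizing h h'
  · simpa only [norm_corrSum_comm u h] using this hne.symm (by omega)
  have hshift :=
    (hcorr (h - h') (by omega)).comp_add_right (fun j => norm_mul_conj_le_one hu _ j) h'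
  rw [cesaroNull_iff_norm] at hshift
  convert hshift using 4 with N
  exact sum_congr rfl fun j _ => by rw [show j + h' + (h - h') = j + h by omega]

lemma norm_mul_sum_sub_sum_window_le (hu : ∀ j, ‖u j‖ ≤ 1) (H N : ℕ) :
    ‖(H : ℂ) * ∑ j ∈ range N, u j - ∑ j ∈ range N, ∑ h ∈ range H, u (j + h)‖ ≤ 2 * H ^ 2 := by
  have : (H : ℂ) * ∑ j ∈ range N, u j - ∑ j ∈ range N, ∑ h ∈ range H, u (j + h)
      = ∑ h ∈ range H, (∑ j ∈ range N, u j - ∑ j ∈ range N, u (j + h)) := by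
    rw [sum_comm, sum_sub_distrib]
    simp
  rw [this]
  calc _ ≤ ∑ _h ∈ range H, 2 * (H : ℝ) := norm_sum_le_of_le _ fun h hh => by
        rw [norm_sub_rev]
        have : (h : ℝ) ≤ H := by exact_mod_cast (mem_range.1 hh).le
        linarith [norm_sum_range_add_sub_le hu h N]
    _ = 2 * H ^ 2 := by simp; ring

lemma norm_sum_window_sq_le (H N : ℕ) :
    ‖∑ j ∈ range N, ∑ h ∈ range H, u (j + h)‖ ^ 2
      ≤ N * ∑ h ∈ range H, ∑ h' ∈ range H, ‖corrSum u h h' N‖ := by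
  set v : ℕ → ℂ := fun j => ∑ h ∈ range H, u (j + h)
  have hcs : ‖∑ j ∈ range N, v j‖ ^ 2 ≤ N * ∑ j ∈ range N, ‖v j‖ ^ 2 :=
    (pow_le_pow_left₀ (norm_nonneg _) (norm_sum_le _ _) 2).trans
      (by simpa using sq_sum_le_card_mul_sum_sq (s := range N) (f := fun j => ‖v j‖))
  have hexpand : ((∑ j ∈ range N, ‖v j‖ ^ 2 : ℝ) : ℂ)
      = ∑ h ∈ range H, ∑ h' ∈ range H, corrSum u h h' N := by
    simp only [Complex.ofReal_sum, Complex.ofReal_pow, ← Complex.mul_conj', v, map_sum,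
      sum_mul_sum, corrSum]
    rw [sum_comm]
    exact sum_congr rfl fun _ _ => sum_comm
  refine hcs.trans (mul_le_mul_of_nonneg_left ?_ (Nat.cast_nonneg N))
  calc ∑ j ∈ range N, ‖v j‖ ^ 2 = ‖((∑ j ∈ range N, ‖v j‖ ^ 2 : ℝ) : ℂ)‖ :=
        (Complex.norm_of_nonneg (by positivity)).symm
    _ ≤ _ := by
      rw [hexpand]
      exact (norm_sum_le _ _).trans (sum_le_sum fun _ _ => norm_sum_le _ _)

lemma inv_mul_norm_sum_le (hu : ∀ j, ‖u j‖ ≤ 1) {H N : ℕ} (hH : 0 < H) (hN : 0 < N) :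
    (N : ℝ)⁻¹ * ‖∑ j ∈ range N, u j‖
      ≤ 2 * H / N + √(∑ h ∈ range H, ∑ h' ∈ range H, (N : ℝ)⁻¹ * ‖corrSum u h h' N‖) / H := by
  set W := ‖∑ j ∈ range N, ∑ h ∈ range H, u (j + h)‖
  have hH' : (0 : ℝ) < H := by exact_mod_cast hH
  have hN' : (0 : ℝ) < N := by exact_mod_cast hN
  have hshift : H * ‖∑ j ∈ range N, u j‖ ≤ W + 2 * H ^ 2 := by
    have := (norm_sub_norm_le _ _).trans (norm_mul_sum_sub_sum_window_le hu H N)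
    rw [norm_mul, Complex.norm_natCast] at this
    linarith
  have hW : W / N ≤ √(∑ h ∈ range H, ∑ h' ∈ range H, (N : ℝ)⁻¹ * ‖corrSum u h h' N‖) := by
    refine (le_abs_self _).trans (Real.abs_le_sqrt ?_)
    simp only [← mul_sum]
    rw [div_pow, div_le_iff₀ (by positivity)]
    calc W ^ 2 ≤ N * ∑ h ∈ range H, ∑ h' ∈ range H, ‖corrSum u h h' N‖ := norm_sum_window_sq_le H N
      _ = _ := by field_simp
  rw [div_le_iff₀ hN'] at hW
  rw [inv_mul_le_iff₀ hN']
  calc ‖∑ j ∈ range N, u j‖ ≤ (W + 2 * H ^ 2) / H := by rw [le_div_iff₀ hH']; linarith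
    _ ≤ (_ * N + 2 * H ^ 2) / H := by gcongr
    _ = _ := by field_simp; ring

theorem CesaroNull.of_shift_mul_conj (hu : ∀ j, ‖u j‖ ≤ 1)
    (hcorr : ∀ s, 1 ≤ s → CesaroNull (fun j => u (j + s) * conj (u j))) : CesaroNull u := by
  rw [cesaroNull_iff_norm]
  -- for every window length `H` the averages are eventually below `1 / √H`
  refine tendsto_order.2 ⟨fun a ha => .of_forall fun N => ha.trans_le (by positivity),
    fun ε hε => ?_⟩
  obtain ⟨H, hH⟩ := exists_nat_gt (ε ^ 2)⁻¹
  have hH₀ : (0 : ℝ) < H := lt_trans (by positivity) hH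
  let g (h h' N : ℕ) : ℝ := if h = h' then 1 else (N : ℝ)⁻¹ * ‖corrSum u h h' N‖
  have hg : ∀ h h', Tendsto (g h h') atTop (𝓝 (if h = h' then 1 else 0)) := fun h h' => by
    by_cases hh : h = h'
    · simp [g, hh]
    · simpa [g, hh] using tendsto_inv_mul_norm_corrSum hu hcorr hh
  have hlim : Tendsto (fun N : ℕ => 2 * H / N + √(∑ h ∈ range H, ∑ h' ∈ range H, g h h' N) / H)
      atTop (𝓝 (√H / H)) := by
    have hsum := tendsto_finsetSum (range H) fun h _ =>
      tendsto_finsetSum (range H) fun h' _ => hg h h'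
    simp only [sum_ite_eq, sum_ite_mem, inter_self, sum_const, card_range, nsmul_one] at hsum
    simpa using (tendsto_const_div_atTop_nhds_zero_nat (2 * H : ℝ)).add
      ((hsum.sqrt).div_const (H : ℝ))
  have hsmall : √H / H < ε := by
    rw [Real.sqrt_div_self', one_div, ← Real.sqrt_inv, Real.sqrt_lt' hε]
    exact inv_lt_of_inv_lt₀ (by positivity) hH
  filter_upwards [hlim.eventually_lt_const hsmall, eventually_gt_atTop 0] with N hN hN₀
  refine (inv_mul_norm_sum_le hu (by exact_mod_cast hH₀) hN₀).trans_lt (lt_of_le_of_lt ?_ hN)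
  gcongr with h _ h' _
  by_cases hh : h = h'
  · subst hh
    simp only [g, if_pos rfl]
    exact inv_mul_le_one_of_le₀ (norm_corrSum_self_le hu h N) (Nat.cast_nonneg N)
  · simp [g, hh]

end VanDerCorput

section PolynomialSequences

variable {M : Type*} [CommGroup M]

def mulDiff (s : ℕ) (u : ℕ → M) (j : ℕ) : M := u (j + s) / u j

lemma mulDiff_commute (s t : ℕ) :
    Function.Commute (mulDiff s : (ℕ → M) → ℕ → M) (mulDiff t) := fun u => by
  funext j
  simp only [mulDiff, add_right_comm j s t]
  exact div_div_div_comm _ _ _ _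

lemma mulDiff_eq_pow {u : ℕ → M} {c : M} (h : mulDiff 1 u = fun _ => c) (s : ℕ) :
    mulDiff s u = fun _ => c ^ s := by
  funext j
  induction s with
  | zero => simp [mulDiff]
  | succ s ih =>
    rw [pow_succ', ← ih, ← congrFun h (j + s)]
    simp only [mulDiff, add_assoc, div_mul_div_cancel]

lemma iterate_mulDiff_mulDiff {u : ℕ → M} {c : M} {d : ℕ}
    (h : (mulDiff 1)^[d + 1] u = fun _ => c) (s : ℕ) :
    (mulDiff 1)^[d] (mulDiff s u) = fun _ => c ^ s := by
  rw [((mulDiff_commute s 1).symm.iterate_left d).eq]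
  exact mulDiff_eq_pow (by rwa [← Function.iterate_succ_apply' (mulDiff 1)]) s

theorem cesaroNull_of_iterate_mulDiff {d : ℕ} {u : ℕ → Circle} {c : Circle}
    (hc : ¬IsOfFinOrder c) (h : (mulDiff 1)^[d + 1] u = fun _ => c) :
    CesaroNull (fun j => (u j : ℂ)) := by
  induction d generalizing u c with
  | zero =>
    have hu : (fun j => (u j : ℂ)) = fun j => (u 0 : ℂ) * (c : ℂ) ^ j := funext fun j => by
      rw [← Circle.coe_pow, ← Circle.coe_mul, ← congrFun (mulDiff_eq_pow h j) 0]
      simp [mulDiff]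
    rw [hu]
    refine cesaroNull_mul_pow (Circle.norm_coe c).le ?_ _
    exact fun h1 => hc (Circle.coe_eq_one.1 h1 ▸ IsOfFinOrder.one)
  | succ d ih =>
    refine .of_shift_mul_conj (fun j => (Circle.norm_coe _).le) fun s hs => ?_
    have := ih (fun h' => hc (h'.of_pow (by omega))) (iterate_mulDiff_mulDiff h s)
    simpa only [mulDiff, div_eq_mul_inv, Circle.coe_mul, Circle.coe_inv_eq_conj] using this

end PolynomialSequences

section Koopman

variable {K M : Type*} [CommGroup M]

def mulCoboundary (ψ : K → K) (F : K → M) (y : K) : M := F (ψ y) / F y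

lemma iterate_mulDiff_orbit (ψ : K → K) (x : K) (F : K → M) (d : ℕ) :
    (mulDiff 1)^[d] (fun j => F (ψ^[j] x)) = fun j => (mulCoboundary ψ)^[d] F (ψ^[j] x) := by
  have : Function.Semiconj (fun (F : K → M) j => F (ψ^[j] x)) (mulCoboundary ψ) (mulDiff 1) :=
    fun F => funext fun j => by simp [mulCoboundary, mulDiff, Function.iterate_succ_apply']
  exact (this.iterate_right d F).symm

variable [TopologicalSpace K] {ψ : C(K, K)}

lemma coe_iterate_mulCoboundary {Λ : C(K, ℂ) → C(K, ℂ)} (hΛ : ∀ f, Λ f = f.comp ψ * star f)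
    {f : C(K, ℂ)} {F : K → Circle} (hF : ∀ y, (F y : ℂ) = f y) (k : ℕ) (y : K) :
    (((mulCoboundary ψ)^[k] F y : Circle) : ℂ) = (Λ^[k] f) y := by
  induction k generalizing y with
  | zero => exact hF y
  | succ k ih =>
    rw [Function.iterate_succ_apply', Function.iterate_succ_apply', hΛ, mulCoboundary,
      div_eq_mul_inv, Circle.coe_mul, Circle.coe_inv_eq_conj, ih, ih]
    rfl

lemma iterate_apply_eq_of_eq_comp {T : C(K, ℂ) → C(K, ℂ)} (hT : ∀ f, T f = f.comp ψ)
    (f : C(K, ℂ)) (j : ℕ) (x : K) : (T^[j] f) x = f (ψ^[j] x) := by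
  induction j generalizing x with
  | zero => rfl
  | succ j ih =>
    rw [Function.iterate_succ_apply', hT, ContinuousMap.comp_apply, ih, Function.iterate_succ_apply]

lemma exists_mulCoboundary_eq_const [Nonempty K] {Λ : C(K, ℂ) → C(K, ℂ)}
    (hΛ : ∀ f, Λ f = f.comp ψ * star f)
    (hfix : ∀ f : C(K, ℂ), f.comp ψ = f → ∃ c : ℂ, f = ContinuousMap.const K c)
    {g : C(K, ℂ)} {F : K → Circle} (hF : ∀ y, (F y : ℂ) = g y) (hg₂ : Λ (Λ g) = 1)
    (htorsion : ∀ k : ℕ, 1 ≤ k → (Λ g) ^ k = 1 → Λ g = 1) (hg₁ : Λ g ≠ 1) :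
    ∃ c : Circle, ¬IsOfFinOrder c ∧ mulCoboundary ψ F = fun _ => c := by
  obtain ⟨x⟩ := ‹Nonempty K›
  have hΛF : ∀ y, ((mulCoboundary ψ F y : Circle) : ℂ) = Λ g y := coe_iterate_mulCoboundary hΛ hF 1
  have hinv : ∀ y, mulCoboundary ψ F (ψ y) = mulCoboundary ψ F y := fun y => by
    have : ((mulCoboundary ψ (mulCoboundary ψ F) y : Circle) : ℂ) = 1 :=
      (coe_iterate_mulCoboundary hΛ hF 2 y).trans (congrArg (· y) hg₂)
    rwa [Circle.coe_eq_one, mulCoboundary, div_eq_one] at this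
  obtain ⟨c, hc⟩ := hfix (Λ g) (ContinuousMap.ext fun y => by
    rw [ContinuousMap.comp_apply, ← hΛF, ← hΛF, hinv])
  have hconst : mulCoboundary ψ F = fun _ => mulCoboundary ψ F x :=
    funext fun y => Circle.ext (by rw [hΛF, hΛF, hc]; rfl)
  refine ⟨_, fun hfin => hg₁ ?_, hconst⟩
  obtain ⟨m, hm, hpow⟩ := hfin.exists_pow_eq_one
  refine htorsion m hm (ContinuousMap.ext fun y => ?_)
  rw [ContinuousMap.pow_apply, ← hΛF, congrFun hconst y, ← Circle.coe_pow, hpow]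
  rfl

end Koopman

theorem stmt12_general {K : Type*} [TopologicalSpace K]
    (ψ : C(K, K))
    (T : C(K, ℂ) → C(K, ℂ)) (hT : ∀ f, T f = f.comp ψ)
    (Λ : C(K, ℂ) → C(K, ℂ)) (hΛ : ∀ f, Λ f = f.comp ψ * star f)
    (G : Set C(K, ℂ))
    (hG : G = {f | (∀ x, ‖f x‖ = 1) ∧ ∃ n : ℕ, Λ^[n] f = 1})
    (hfix : ∀ f : C(K, ℂ), f.comp ψ = f → ∃ c : ℂ, f = ContinuousMap.const K c)
    (htf : ∀ f ∈ G, Λ (Λ f) = 1 → ∀ k : ℕ, 1 ≤ k → (Λ f) ^ k = 1 → Λ f = 1)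
    (x : K) (f : C(K, ℂ)) (hfG : f ∈ G) (hf1 : Λ f ≠ 1) :
    Filter.Tendsto (fun N : ℕ => (N : ℂ)⁻¹ * ∑ j ∈ Finset.range N, (T^[j] f) x)
      Filter.atTop (nhds 0) := by
  subst hG
  obtain ⟨hf_norm, n, hn⟩ := hfG
  have : Nonempty K := ⟨x⟩
  let F : K → Circle := fun y => ⟨f y, by simpa [Submonoid.unitSphere] using hf_norm y⟩
  have hF := coe_iterate_mulCoboundary hΛ (F := F) fun _ => rfl
  obtain ⟨d, hd, hd₂⟩ : ∃ d, Λ^[d + 1] f ≠ 1 ∧ Λ^[d + 2] f = 1 :=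
    Nat.exists_not_and_succ_of_not_zero_of_exists (p := fun d => Λ^[d + 1] f = 1) hf1
      ⟨n, by rw [Function.iterate_succ_apply', hn]; ext; simp [hΛ]⟩
  have hΛd : Λ (Λ^[d] f) = Λ^[d + 1] f := (Function.iterate_succ_apply' Λ d f).symm
  have hΛΛd : Λ (Λ (Λ^[d] f)) = 1 := by rwa [hΛd, ← Function.iterate_succ_apply' Λ]
  have hmem : Λ^[d] f ∈ {f | (∀ x, ‖f x‖ = 1) ∧ ∃ n : ℕ, Λ^[n] f = 1} :=
    ⟨fun y => by rw [← hF]; exact Circle.norm_coe _,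
      2, by rwa [← Function.iterate_add_apply, add_comm]⟩
  obtain ⟨c, hc, hFc⟩ := exists_mulCoboundary_eq_const hΛ hfix (hF d) hΛΛd
    (htf _ hmem hΛΛd) (hΛd ▸ hd)
  have horbit := cesaroNull_of_iterate_mulDiff hc
    (by rw [iterate_mulDiff_orbit ψ x, Function.iterate_succ_apply', hFc])
  simpa only [CesaroNull, iterate_apply_eq_of_eq_comp hT] using horbit

/-- Hahn–Parry: for a topological system with quasi-discrete spectrum, with
`dim fix(T) = 1` and torsion-free group of unimodular eigenvalues, the Cesàro
averages of `T^j f` at every point tend to `0` for every quasi-eigenvector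
`f ∈ G \ G₁`. -/
theorem stmt12 {K : Type*} [TopologicalSpace K] [CompactSpace K] [T2Space K]
    (ψ : C(K, K))
    (T : C(K, ℂ) → C(K, ℂ)) (hT : ∀ f, T f = f.comp ψ)
    (Λ : C(K, ℂ) → C(K, ℂ)) (hΛ : ∀ f, Λ f = f.comp ψ * star f)
    (G : Set C(K, ℂ))
    (hG : G = {f | (∀ x, ‖f x‖ = 1) ∧ ∃ n : ℕ, Λ^[n] f = 1})
    (hqds : Dense (Submodule.span ℂ G : Set C(K, ℂ)))
    (hfix : ∀ f : C(K, ℂ), f.comp ψ = f → ∃ c : ℂ, f = ContinuousMap.const K c)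
    (htf : ∀ f ∈ G, Λ (Λ f) = 1 → ∀ k : ℕ, 1 ≤ k → (Λ f) ^ k = 1 → Λ f = 1)
    (x : K) (f : C(K, ℂ)) (hfG : f ∈ G) (hf1 : Λ f ≠ 1) :
    Filter.Tendsto (fun N : ℕ => (N : ℂ)⁻¹ * ∑ j ∈ Finset.range N, (T^[j] f) x)
      Filter.atTop (nhds 0) :=
  stmt12_general ψ T hT Λ hΛ G hG hfix htf x f hfG hf1
end
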